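/- Let N ∈ {3,4}, let U_n be the truncated Aubin–Talenti bubbles, and let φ : ℝ^N → ℝ be a bounded measurable function. Then there exists C > 0 such that for all integers n ≥ 1, |∫_{ℝ^N} φ(x) U_n(x) dx| ≤ C · n^{−(N−2)/2} and |∫_{ℝ^N} φ(x) U_n(x)^{2*−1} dx| ≤ C · n^{−(N−2)/2}. -/

import Mathlib

open Real MeasureTheory

/-- The critical Sobolev exponent `2* = 2N/(N-2)`. -/
noncomputable def twoStar (N : ℕ) : ℝ := 2 * (N : ℝ) / ((N : ℝ) - 2)

/-- The radial profile of the truncated Aubin–Talenti bubble. -/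
noncomputable def bubbleProfile (N n : ℕ) (r : ℝ) : ℝ :=
  if r < 1 then
    ((N : ℝ) * ((N : ℝ) - 2)) ^ (((N : ℝ) - 2) / 4)
      * ((n : ℝ) / (1 + (n : ℝ) ^ 2 * r ^ 2)) ^ (((N : ℝ) - 2) / 2)
  else if r < 2 then
    ((N : ℝ) * ((N : ℝ) - 2)) ^ (((N : ℝ) - 2) / 4)
      * ((n : ℝ) / (1 + (n : ℝ) ^ 2)) ^ (((N : ℝ) - 2) / 2) * (2 - r)
  else 0

/-- The truncated Aubin–Talenti bubble `U_n` on `ℝ^N`. -/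
noncomputable def Ubub (N n : ℕ) (x : EuclideanSpace ℝ (Fin N)) : ℝ :=
  bubbleProfile N n ‖x‖

/-! The truncated bubble is dominated by a multiple of the full bubble `(n / (1 + n²|x|²))^s`,
`s = (N - 2)/2`, and vanishes for `|x| ≥ 2`. Against `U_n`, the bound
`(n / (1 + n²r²))^s ≤ n^(-s) r^(2-N)` leaves a function integrable on the ball of radius `2`.
Against `U_n^(2* - 1)` the exponent becomes `s (2* - 1) = (N + 2)/2 > N/2`, so the power of the full
bubble is integrable on `ℝ^N`, and the scaling `x ↦ n x` yields the factor
`n^((N + 2)/2 - N) = n^(-s)`. -/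

open Metric Module Set

section Scaling

variable {E : Type*} [NormedAddCommGroup E] [NormedSpace ℝ E] [FiniteDimensional ℝ E]
  [MeasurableSpace E] [BorelSpace E] (μ : Measure E) [μ.IsAddHaarMeasure]

lemma rpow_div_one_add_sq_mul_sq {c : ℝ} (hc : 0 < c) (r q : ℝ) :
    (c / (1 + c ^ 2 * r ^ 2)) ^ q = c ^ q * (1 + (c * r) ^ 2) ^ (-q) := by
  rw [div_rpow hc.le (by positivity), rpow_neg (by positivity), mul_pow, div_eq_mul_inv]

theorem integral_rpow_div_one_add_sq_mul_norm_sq {c : ℝ} (hc : 0 < c) (q : ℝ) :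
    ∫ x, (c / (1 + c ^ 2 * ‖x‖ ^ 2)) ^ q ∂μ
      = c ^ (q - finrank ℝ E) * ∫ x, (1 + ‖x‖ ^ 2) ^ (-q) ∂μ := by
  have hscale : ∀ x : E, (c / (1 + c ^ 2 * ‖x‖ ^ 2)) ^ q = c ^ q * (1 + ‖c • x‖ ^ 2) ^ (-q) :=
    fun x => by rw [norm_smul, Real.norm_of_nonneg hc.le, rpow_div_one_add_sq_mul_sq hc]
  simp_rw [hscale, integral_const_mul,
    Measure.integral_comp_smul_of_nonneg μ (fun y : E => (1 + ‖y‖ ^ 2) ^ (-q)) c (hR := hc.le),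
    smul_eq_mul, rpow_sub hc, rpow_natCast, div_eq_mul_inv, mul_assoc]

theorem integrable_rpow_div_one_add_sq_mul_norm_sq {c : ℝ} (hc : 0 < c) {q : ℝ}
    (hq : (finrank ℝ E : ℝ) < 2 * q) :
    Integrable (fun x => (c / (1 + c ^ 2 * ‖x‖ ^ 2)) ^ q) μ := by
  refine (((integrable_rpow_neg_one_add_norm_sq (E := E) (μ := μ) hq).comp_smul hc.ne').const_mul
    (c ^ q)).congr (ae_of_all _ fun x => ?_)
  simp only [norm_smul, Real.norm_of_nonneg hc.le, rpow_div_one_add_sq_mul_sq hc]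
  ring_nf

end Scaling

theorem abs_integral_mul_le_of_abs_le {α : Type*} [MeasurableSpace α] {μ : Measure α}
    {φ g G : α → ℝ} {M : ℝ} (hφ : ∀ x, |φ x| ≤ M) (hg : ∀ x, 0 ≤ g x)
    (hgG : ∀ᵐ x ∂μ, g x ≤ G x) (hG : Integrable G μ) :
    |∫ x, φ x * g x ∂μ| ≤ M * ∫ x, G x ∂μ := by
  rw [← Real.norm_eq_abs, ← integral_const_mul]
  refine norm_integral_le_of_norm_le (hG.const_mul M) ?_
  filter_upwards [hgG] with x hx
  rw [norm_mul, Real.norm_eq_abs, Real.norm_eq_abs, abs_of_nonneg (hg x)]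
  exact mul_le_mul (hφ x) hx (hg x) ((abs_nonneg _).trans (hφ x))

lemma rpow_div_one_add_sq_mul_sq_le {c r : ℝ} (hc : 0 < c) (hr : 0 < r) {s : ℝ} (hs : 0 ≤ s) :
    (c / (1 + c ^ 2 * r ^ 2)) ^ s ≤ c ^ (-s) * r ^ (-(2 * s)) := by
  calc (c / (1 + c ^ 2 * r ^ 2)) ^ s ≤ (c / (c ^ 2 * r ^ 2)) ^ s := by
        gcongr
        linarith
    _ = c ^ (-s) * r ^ (-(2 * s)) := by
        rw [show c / (c ^ 2 * r ^ 2) = c⁻¹ * (r ^ 2)⁻¹ by field_simp, mul_rpow (by positivity)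
          (by positivity), inv_rpow hc.le, inv_rpow (by positivity), ← rpow_natCast,
          ← rpow_mul hr.le, rpow_neg hc.le, rpow_neg hr.le]
        norm_num

section Bubble

variable {N : ℕ}

lemma bubbleProfile_eq_zero_of_two_le (n : ℕ) {r : ℝ} (hr : 2 ≤ r) :
    bubbleProfile N n r = 0 := by
  rw [bubbleProfile, if_neg (by linarith), if_neg (by linarith)]

lemma bubbleProfile_nonneg (hN : 2 ≤ N) (n : ℕ) (r : ℝ) : 0 ≤ bubbleProfile N n r := by
  have hN' : (2 : ℝ) ≤ N := by exact_mod_cast hN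
  have hA : 0 ≤ ((N : ℝ) * ((N : ℝ) - 2)) ^ (((N : ℝ) - 2) / 4) :=
    rpow_nonneg (mul_nonneg (by linarith) (by linarith)) _
  unfold bubbleProfile
  split_ifs with h1 h2
  · positivity
  · exact mul_nonneg (by positivity) (by linarith)
  · exact le_rfl

lemma exists_bubbleProfile_le (hN : 2 ≤ N) :
    ∃ K, 0 ≤ K ∧ ∀ (n : ℕ) (r : ℝ),
      bubbleProfile N n r ≤ K * ((n : ℝ) / (1 + (n : ℝ) ^ 2 * r ^ 2)) ^ (((N : ℝ) - 2) / 2) := by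
  have hN' : (2 : ℝ) ≤ N := by exact_mod_cast hN
  unfold bubbleProfile
  set A := ((N : ℝ) * ((N : ℝ) - 2)) ^ (((N : ℝ) - 2) / 4)
  set s := ((N : ℝ) - 2) / 2
  have hA : 0 ≤ A := rpow_nonneg (mul_nonneg (by linarith) (by linarith)) _
  have hs : 0 ≤ s := by simp only [s]; linarith
  have h4 : 1 ≤ (4 : ℝ) ^ s := one_le_rpow (by norm_num) hs
  refine ⟨A * 4 ^ s, by positivity, fun n r => ?_⟩
  split_ifs with h1 h2
  · rw [mul_assoc]
    exact mul_le_mul_of_nonneg_left (le_mul_of_one_le_left (by positivity) h4) hA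
  · -- on `[1, 2)` the truncation is dominated by the bubble itself: `1 + n²r² ≤ 4 (1 + n²)`
    have hbase : (n : ℝ) / (1 + n ^ 2) ≤ 4 * ((n : ℝ) / (1 + n ^ 2 * r ^ 2)) := by
      rw [← mul_div_assoc, div_le_div_iff₀ (by positivity) (by positivity)]
      have hr : 0 ≤ 4 - r ^ 2 := by nlinarith [not_lt.1 h1]
      have : 0 ≤ (n : ℝ) * (3 + n ^ 2 * (4 - r ^ 2)) := by positivity
      linarith
    calc A * ((n : ℝ) / (1 + n ^ 2)) ^ s * (2 - r) ≤ A * ((n : ℝ) / (1 + n ^ 2)) ^ s * 1 := by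
          gcongr
          linarith
      _ ≤ A * (4 * ((n : ℝ) / (1 + n ^ 2 * r ^ 2))) ^ s := by
          rw [mul_one]
          gcongr
      _ = A * 4 ^ s * ((n : ℝ) / (1 + n ^ 2 * r ^ 2)) ^ s := by
          rw [mul_rpow (by norm_num) (by positivity), mul_assoc]
  · positivity

end Bubble

section Ubub

variable {N : ℕ} {φ : EuclideanSpace ℝ (Fin N) → ℝ} {M : ℝ}

lemma Ubub_nonneg (hN : 2 ≤ N) (n : ℕ) (x : EuclideanSpace ℝ (Fin N)) : 0 ≤ Ubub N n x :=
  bubbleProfile_nonneg hN n _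

theorem exists_abs_integral_mul_Ubub_le (hN : 2 < N) (hφ : ∀ x, |φ x| ≤ M) :
    ∃ C, ∀ n : ℕ, 1 ≤ n →
      |∫ x, φ x * Ubub N n x| ≤ C * (n : ℝ) ^ (-(((N : ℝ) - 2) / 2)) := by
  obtain ⟨K, hK0, hK⟩ := exists_bubbleProfile_le hN.le
  have hN' : (2 : ℝ) < N := by exact_mod_cast hN
  set s := ((N : ℝ) - 2) / 2
  let G : EuclideanSpace ℝ (Fin N) → ℝ := (ball 0 2).indicator fun x => K * ‖x‖ ^ (-(2 * s))
  have hG : Integrable G := by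
    have hmeas : AEStronglyMeasurable fun x : EuclideanSpace ℝ (Fin N) => K * ‖x‖ ^ (-(2 * s)) :=
      ((measurable_norm.pow_const _).const_mul K).aestronglyMeasurable
    refine (integrableOn_ball_of_norm_le_rpow (C := K) (α := 2 * s) ?_ ?_
      (ae_of_all _ fun x => ?_) hmeas).integrable_indicator measurableSet_ball
    · rw [finrank_euclideanSpace_fin]; omega
    · rw [finrank_euclideanSpace_fin]; simp only [s]; linarith
    · rw [Real.norm_of_nonneg (by positivity)]
  refine ⟨M * ∫ x, G x, fun n hn => ?_⟩
  have hn0 : (0 : ℝ) < n := by exact_mod_cast hn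
  calc |∫ x, φ x * Ubub N n x|
      ≤ M * ∫ x, (n : ℝ) ^ (-s) * G x :=
        abs_integral_mul_le_of_abs_le hφ (Ubub_nonneg hN.le n) ?_ (hG.const_mul _)
    _ = (M * ∫ x, G x) * (n : ℝ) ^ (-s) := by rw [integral_const_mul]; ring
  have : Nontrivial (EuclideanSpace ℝ (Fin N)) :=
    Module.nontrivial_of_finrank_pos (R := ℝ) (by rw [finrank_euclideanSpace_fin]; omega)
  filter_upwards [Measure.ae_ne volume 0] with x hx
  simp only [G]
  by_cases h2 : ‖x‖ < 2
  · rw [indicator_of_mem (mem_ball_zero_iff.2 h2)]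
    calc Ubub N n x ≤ K * ((n : ℝ) / (1 + (n : ℝ) ^ 2 * ‖x‖ ^ 2)) ^ s := hK n ‖x‖
      _ ≤ K * ((n : ℝ) ^ (-s) * ‖x‖ ^ (-(2 * s))) := by
          gcongr
          exact rpow_div_one_add_sq_mul_sq_le hn0 (norm_pos_iff.2 hx) (by simp only [s]; linarith)
      _ = (n : ℝ) ^ (-s) * (K * ‖x‖ ^ (-(2 * s))) := by ring
  · rw [Ubub, bubbleProfile_eq_zero_of_two_le n (not_lt.1 h2),
      indicator_of_notMem (by simpa using h2), mul_zero]

theorem exists_abs_integral_mul_Ubub_rpow_le (hN : 2 < N) (hφ : ∀ x, |φ x| ≤ M) :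
    ∃ C, ∀ n : ℕ, 1 ≤ n →
      |∫ x, φ x * Ubub N n x ^ (twoStar N - 1)| ≤ C * (n : ℝ) ^ (-(((N : ℝ) - 2) / 2)) := by
  obtain ⟨K, hK0, hK⟩ := exists_bubbleProfile_le hN.le
  have hN' : (2 : ℝ) < N := by exact_mod_cast hN
  set s := ((N : ℝ) - 2) / 2
  set t := twoStar N - 1
  set q := ((N : ℝ) + 2) / 2
  have ht : 0 ≤ t := by
    simp only [t, twoStar]
    rw [sub_nonneg, le_div_iff₀ (by linarith)]
    linarith
  have hst : s * t = q := by
    have : (N : ℝ) - 2 ≠ 0 := by linarith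
    simp only [s, t, q, twoStar]
    field_simp
    ring
  refine ⟨M * (K ^ t * ∫ x : EuclideanSpace ℝ (Fin N), (1 + ‖x‖ ^ 2) ^ (-q)), fun n hn => ?_⟩
  have hn0 : (0 : ℝ) < n := by exact_mod_cast hn
  calc |∫ x, φ x * Ubub N n x ^ t|
      ≤ M * ∫ x, K ^ t * ((n : ℝ) / (1 + (n : ℝ) ^ 2 * ‖x‖ ^ 2)) ^ q :=
        abs_integral_mul_le_of_abs_le hφ (fun x => rpow_nonneg (Ubub_nonneg hN.le n x) t) ?_
          ((integrable_rpow_div_one_add_sq_mul_norm_sq _ hn0 ?_).const_mul _)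
    _ = M * (K ^ t * ∫ x : EuclideanSpace ℝ (Fin N), (1 + ‖x‖ ^ 2) ^ (-q)) * (n : ℝ) ^ (-s) := by
        rw [integral_const_mul, integral_rpow_div_one_add_sq_mul_norm_sq _ hn0,
          finrank_euclideanSpace_fin, show q - N = -s by simp only [q, s]; ring]
        ring
  · refine ae_of_all _ fun x => ?_
    calc Ubub N n x ^ t ≤ (K * ((n : ℝ) / (1 + (n : ℝ) ^ 2 * ‖x‖ ^ 2)) ^ s) ^ t :=
          rpow_le_rpow (Ubub_nonneg hN.le n x) (hK n ‖x‖) ht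
      _ = K ^ t * ((n : ℝ) / (1 + (n : ℝ) ^ 2 * ‖x‖ ^ 2)) ^ q := by
          rw [mul_rpow hK0 (by positivity), ← rpow_mul (by positivity), hst]
  · rw [finrank_euclideanSpace_fin]
    simp only [q]
    linarith

end Ubub

theorem stmt_10_general (N : ℕ) (hN : N = 3 ∨ N = 4)
    (φ : EuclideanSpace ℝ (Fin N) → ℝ)
    (M : ℝ) (hφbdd : ∀ x, |φ x| ≤ M) :
    ∃ C : ℝ, 0 < C ∧ ∀ n : ℕ, 1 ≤ n →
      |∫ x : EuclideanSpace ℝ (Fin N), φ x * Ubub N n x|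
          ≤ C * (n : ℝ) ^ (-(((N : ℝ) - 2) / 2)) ∧
      |∫ x : EuclideanSpace ℝ (Fin N), φ x * (Ubub N n x) ^ (twoStar N - 1)|
          ≤ C * (n : ℝ) ^ (-(((N : ℝ) - 2) / 2)) := by
  have hN2 : 2 < N := by omega
  obtain ⟨C₁, hC₁⟩ := exists_abs_integral_mul_Ubub_le hN2 hφbdd
  obtain ⟨C₂, hC₂⟩ := exists_abs_integral_mul_Ubub_rpow_le hN2 hφbdd
  refine ⟨max (max C₁ C₂) 1, by positivity, fun n hn => ⟨?_, ?_⟩⟩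
  · exact (hC₁ n hn).trans (by gcongr; exact (le_max_left _ _).trans (le_max_left _ _))
  · exact (hC₂ n hn).trans (by gcongr; exact (le_max_right _ _).trans (le_max_left _ _))

theorem stmt_10 (N : ℕ) (hN : N = 3 ∨ N = 4)
    (φ : EuclideanSpace ℝ (Fin N) → ℝ) (hφmeas : Measurable φ)
    (M : ℝ) (hφbdd : ∀ x, |φ x| ≤ M) :
    ∃ C : ℝ, 0 < C ∧ ∀ n : ℕ, 1 ≤ n →
      |∫ x : EuclideanSpace ℝ (Fin N), φ x * Ubub N n x|
          ≤ C * (n : ℝ) ^ (-(((N : ℝ) - 2) / 2)) ∧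
      |∫ x : EuclideanSpace ℝ (Fin N), φ x * (Ubub N n x) ^ (twoStar N - 1)|
          ≤ C * (n : ℝ) ^ (-(((N : ℝ) - 2) / 2)) :=
  stmt_10_general N hN φ M hφbdd
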